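/- arXiv:2011.11282 — 3 statements merged into one kernel-verified Lean document; each statement's English description precedes it below -/
import Mathlib

section
/- If Ω is a potential maximal clique of a graph G and some vertex v ∈ Ω has no neighbor outside Ω, then Ω = N[v], the closed neighborhood of v. -/
/-- The graph `H` with vertices of `Ω` made isolated (edges within `V \ Ω`). -/
def restrict {V : Type*} (H : SimpleGraph V) (Ω : Set V) : SimpleGraph V where
  Adj a b := H.Adj a b ∧ a ∉ Ω ∧ b ∉ Ω
  symm := ⟨fun _ _ ⟨h, ha, hb⟩ => ⟨h.symm, hb, ha⟩⟩
  loopless := ⟨fun _ h => H.irrefl h.1⟩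

/-- `C` is the vertex set of a connected component of `H \ Ω`. -/
def IsCompOf {V : Type*} (H : SimpleGraph V) (Ω C : Set V) : Prop :=
  ∃ a, a ∉ Ω ∧ C = {b | b ∉ Ω ∧ (restrict H Ω).Reachable a b}

/-- Neighborhood of a vertex set: vertices outside `C` adjacent to some vertex of `C`. -/
def nbhd {V : Type*} (H : SimpleGraph V) (C : Set V) : Set V :=
  {w | w ∉ C ∧ ∃ c ∈ C, H.Adj w c}

/-- `Ω` is a potential maximal clique of `H`. -/
def IsPMC {V : Type*} (H : SimpleGraph V) (Ω : Set V) : Prop :=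
  (∀ C, IsCompOf H Ω C → nbhd H C ≠ Ω) ∧
  (∀ u ∈ Ω, ∀ v ∈ Ω, u ≠ v →
    H.Adj u v ∨ ∃ C, IsCompOf H Ω C ∧ u ∈ nbhd H C ∧ v ∈ nbhd H C)

/-- A PMC is free if every vertex of `Ω` has a neighbor outside `Ω`. -/
def IsFree {V : Type*} (H : SimpleGraph V) (Ω : Set V) : Prop :=
  ∀ v ∈ Ω, ∃ w, w ∉ Ω ∧ H.Adj v w

theorem IsCompOf.subset_compl {V : Type*} {H : SimpleGraph V} {Ω C : Set V}
    (hC : IsCompOf H Ω C) : C ⊆ Ωᶜ := by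
  obtain ⟨_, _, rfl⟩ := hC
  exact fun _ hb => hb.1

theorem notMem_nbhd_of_forall_adj_mem {V : Type*} {H : SimpleGraph V} {Ω C : Set V} {v : V}
    (hC : IsCompOf H Ω C) (hno : ∀ w, H.Adj v w → w ∈ Ω) : v ∉ nbhd H C := by
  rintro ⟨-, c, hc, hvc⟩
  exact hC.subset_compl hc (hno c hvc)

theorem IsPMC.adj_of_forall_adj_mem {V : Type*} {H : SimpleGraph V} {Ω : Set V}
    (hΩ : IsPMC H Ω) {v u : V} (hv : v ∈ Ω) (hu : u ∈ Ω) (huv : u ≠ v)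
    (hno : ∀ w, H.Adj v w → w ∈ Ω) : H.Adj v u := by
  rcases hΩ.2 v hv u hu huv.symm with hadj | ⟨C, hC, hvC, -⟩
  · exact hadj
  · exact absurd hvC (notMem_nbhd_of_forall_adj_mem hC hno)

theorem stmt0_general {V : Type*} (H : SimpleGraph V) (Ω : Set V)
    (hΩ : IsPMC H Ω) (v : V) (hv : v ∈ Ω)
    (hno : ∀ w, H.Adj v w → w ∈ Ω) :
    Ω = insert v (H.neighborSet v) := by
  refine Set.Subset.antisymm (fun u hu => ?_) (Set.insert_subset hv hno)
  by_cases huv : u = v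
  · exact huv ▸ Set.mem_insert u _
  · exact Set.mem_insert_of_mem v (hΩ.adj_of_forall_adj_mem hv hu huv hno)

theorem stmt0 {V : Type*} [Fintype V] (H : SimpleGraph V) (Ω : Set V)
    (hΩ : IsPMC H Ω) (v : V) (hv : v ∈ Ω)
    (hno : ∀ w, H.Adj v w → w ∈ Ω) :
    Ω = insert v (H.neighborSet v) :=
  stmt0_general H Ω hΩ v hv hno
end

section
/- In the graph G_k defined below, if {P_1, P_2, P_3} is a partition of [k] into three nonempty parts and Ω is the set of pair-vertices {i,j} with i, j in different parts, then Ω is a free PMC: every vertex of Ω has a neighbor in V(G_k) \ Ω. Moreover G_k \ Ω has exactly three connected components, namely P_t ∪ C(P_t, 2) for t ∈ {1,2,3}. -/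
/-- Vertices of `G_k`: `[k]` together with the 2-element subsets of `[k]`. -/
abbrev GkV (k : ℕ) := Fin k ⊕ {S : Finset (Fin k) // S.card = 2}

/-- The incidence graph of 2-element subsets of `[k]` over `[k]`. -/
def Gk (k : ℕ) : SimpleGraph (GkV k) where
  Adj a b := match a, b with
    | .inl i, .inr S => i ∈ S.val
    | .inr S, .inl i => i ∈ S.val
    | _, _ => False
  symm := ⟨by rintro (i|S) (j|T) h <;> simp_all⟩
  loopless := ⟨by rintro (i|S) h <;> simp_all⟩

/-- `{P1, P2, P3}` is a partition of `[k]` into three nonempty parts. -/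
def IsTripartition {k : ℕ} (P1 P2 P3 : Set (Fin k)) : Prop :=
  P1.Nonempty ∧ P2.Nonempty ∧ P3.Nonempty ∧
  Disjoint P1 P2 ∧ Disjoint P1 P3 ∧ Disjoint P2 P3 ∧ P1 ∪ P2 ∪ P3 = Set.univ

/-- The set of pair-vertices `{i, j}` with `i` and `j` in different parts of `{P1, P2, P3}`. -/
def Omega3 {k : ℕ} (P1 P2 P3 : Set (Fin k)) : Set (GkV k) :=
  {x | ∃ S : {S : Finset (Fin k) // S.card = 2}, x = Sum.inr S ∧
    ∃ i ∈ S.val, ∃ j ∈ S.val, i ≠ j ∧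
      ¬((i ∈ P1 ∧ j ∈ P1) ∨ (i ∈ P2 ∧ j ∈ P2) ∨ (i ∈ P3 ∧ j ∈ P3))}

/-- The component of `G_k \ Ω` associated to a part `P`: `P ∪ C(P, 2)`. -/
def partComp {k : ℕ} (P : Set (Fin k)) : Set (GkV k) :=
  {x | (∃ i ∈ P, x = Sum.inl i) ∨
    ∃ S : {S : Finset (Fin k) // S.card = 2}, x = Sum.inr S ∧ ↑S.val ⊆ P}

/-!
Label each element of `[k]` by the index of its part, so that `Ω` is the set of pairs whose two
elements get different labels. Every pair left after removing `Ω` lies inside one part, so each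
`P_t ∪ C(P_t, 2)` is closed under adjacency, and it is connected through its pairs: these are the
components. The neighbourhood of the component of `P_t` consists of the pairs of `Ω` meeting `P_t`.
It misses the pair joining the two other parts, so it is not `Ω`; and any two pairs of `Ω` meet
two of the three parts each, hence a common one, whose component sees both.
-/

open Function

lemma restrict_adj {V : Type*} {H : SimpleGraph V} {Ω : Set V} {a b : V} :
    (restrict H Ω).Adj a b ↔ H.Adj a b ∧ a ∉ Ω ∧ b ∉ Ω :=
  Iff.rfl

section Gk

variable {k : ℕ}

lemma Gk_adj_inl_inr {i : Fin k} {S : {S : Finset (Fin k) // S.card = 2}} :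
    (Gk k).Adj (.inl i) (.inr S) ↔ i ∈ S.val :=
  Iff.rfl

lemma Gk_adj_inr_inl {i : Fin k} {S : {S : Finset (Fin k) // S.card = 2}} :
    (Gk k).Adj (.inr S) (.inl i) ↔ i ∈ S.val :=
  Iff.rfl

lemma not_Gk_adj_inl_inl (i j : Fin k) : ¬(Gk k).Adj (.inl i) (.inl j) := id

lemma not_Gk_adj_inr_inr (S T : {S : Finset (Fin k) // S.card = 2}) :
    ¬(Gk k).Adj (.inr S) (.inr T) := id

lemma pair_val_nonempty (S : {S : Finset (Fin k) // S.card = 2}) : S.val.Nonempty :=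
  Finset.card_pos.mp (by rw [S.2]; norm_num)

@[simp]
lemma inl_mem_partComp {P : Set (Fin k)} {i : Fin k} : Sum.inl i ∈ partComp P ↔ i ∈ P := by
  simp [partComp]

@[simp]
lemma inr_mem_partComp {P : Set (Fin k)} {S : {S : Finset (Fin k) // S.card = 2}} :
    Sum.inr S ∈ partComp P ↔ ↑S.val ⊆ P := by
  refine ⟨?_, fun h => .inr ⟨S, rfl, h⟩⟩
  rintro (⟨i, -, h⟩ | ⟨T, h, hT⟩)
  · exact absurd h Sum.inr_ne_inl
  · exact Sum.inr_injective h ▸ hT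

lemma inr_mem_nbhd_partComp {P : Set (Fin k)} {S : {S : Finset (Fin k) // S.card = 2}} :
    Sum.inr S ∈ nbhd (Gk k) (partComp P) ↔ ¬↑S.val ⊆ P ∧ ∃ i ∈ S.val, i ∈ P := by
  simp only [nbhd, Set.mem_ofPred_eq, inr_mem_partComp]
  refine and_congr_right fun _ => ⟨?_, ?_⟩
  · rintro ⟨(i | T), hc, hadj⟩
    · exact ⟨i, hadj, inl_mem_partComp.mp hc⟩
    · exact absurd hadj (not_Gk_adj_inr_inr S T)
  · rintro ⟨i, hi, hiP⟩
    exact ⟨.inl i, inl_mem_partComp.mpr hiP, hi⟩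

section Component

variable {Ω : Set (GkV k)} {P : Set (Fin k)}

lemma reachable_of_mem_partComp (hdisj : Disjoint (partComp P) Ω) {a b : GkV k}
    (ha : a ∈ partComp P) (hb : b ∈ partComp P) : (restrict (Gk k) Ω).Reachable a b := by
  have hout : ∀ x ∈ partComp P, x ∉ Ω := fun _ hx => Set.disjoint_left.mp hdisj hx
  have hfrom_inl : ∀ x ∈ partComp P, ∃ i ∈ P, (restrict (Gk k) Ω).Reachable (.inl i) x := by
    rintro (i | S) hx
    · exact ⟨i, inl_mem_partComp.mp hx, .rfl⟩
    · obtain ⟨i, hi⟩ := pair_val_nonempty S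
      have hiP : i ∈ P := inr_mem_partComp.mp hx hi
      have hadj : (restrict (Gk k) Ω).Adj (.inl i) (.inr S) :=
        restrict_adj.mpr ⟨hi, hout _ (inl_mem_partComp.mpr hiP), hout _ hx⟩
      exact ⟨i, hiP, hadj.reachable⟩
  have hinl : ∀ i ∈ P, ∀ j ∈ P, (restrict (Gk k) Ω).Reachable (.inl i) (.inl j) := by
    intro i hi j hj
    rcases eq_or_ne i j with rfl | hij
    · rfl
    let S : {S : Finset (Fin k) // S.card = 2} := ⟨{i, j}, Finset.card_pair hij⟩
    have hS : Sum.inr S ∈ partComp P := by simp [S, Set.insert_subset_iff, hi, hj]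
    have hiS : (restrict (Gk k) Ω).Adj (.inl i) (.inr S) :=
      restrict_adj.mpr ⟨by simp [Gk_adj_inl_inr, S], hout _ (inl_mem_partComp.mpr hi), hout _ hS⟩
    have hSj : (restrict (Gk k) Ω).Adj (.inr S) (.inl j) :=
      restrict_adj.mpr ⟨by simp [Gk_adj_inr_inl, S], hout _ hS, hout _ (inl_mem_partComp.mpr hj)⟩
    exact hiS.reachable.trans hSj.reachable
  obtain ⟨i, hi, hia⟩ := hfrom_inl a ha
  obtain ⟨j, hj, hjb⟩ := hfrom_inl b hb
  exact hia.symm.trans ((hinl i hi j hj).trans hjb)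

variable (hclosed : ∀ S, Sum.inr S ∉ Ω → ∀ i ∈ S.val, i ∈ P → ↑S.val ⊆ P)
include hclosed

lemma mem_partComp_of_adj {x y : GkV k} (hx : x ∈ partComp P)
    (hxy : (restrict (Gk k) Ω).Adj x y) : y ∈ partComp P := by
  obtain ⟨hadj, -, hy⟩ := restrict_adj.mp hxy
  match x, y with
  | .inl i, .inl j => exact absurd hadj (not_Gk_adj_inl_inl i j)
  | .inr S, .inr T => exact absurd hadj (not_Gk_adj_inr_inr S T)
  | .inl i, .inr T => exact inr_mem_partComp.mpr (hclosed T hy i hadj (inl_mem_partComp.mp hx))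
  | .inr S, .inl j => exact inl_mem_partComp.mpr (inr_mem_partComp.mp hx hadj)

lemma mem_partComp_of_reachable {a b : GkV k} (ha : a ∈ partComp P)
    (hab : (restrict (Gk k) Ω).Reachable a b) : b ∈ partComp P := by
  obtain ⟨w⟩ := hab
  induction w with
  | nil => exact ha
  | cons hadj _ ih => exact ih (mem_partComp_of_adj hclosed ha hadj)

lemma setOf_reachable_eq_partComp (hdisj : Disjoint (partComp P) Ω) {a : GkV k}
    (ha : a ∈ partComp P) :
    {b | b ∉ Ω ∧ (restrict (Gk k) Ω).Reachable a b} = partComp P := by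
  ext b
  exact ⟨fun ⟨_, hab⟩ => mem_partComp_of_reachable hclosed ha hab,
    fun hb => ⟨Set.disjoint_left.mp hdisj hb, reachable_of_mem_partComp hdisj ha hb⟩⟩

lemma isCompOf_partComp (hdisj : Disjoint (partComp P) Ω) (hP : P.Nonempty) :
    IsCompOf (Gk k) Ω (partComp P) := by
  obtain ⟨i, hi⟩ := hP
  have ha : Sum.inl i ∈ partComp P := inl_mem_partComp.mpr hi
  exact ⟨_, Set.disjoint_left.mp hdisj ha, (setOf_reachable_eq_partComp hclosed hdisj ha).symm⟩

end Component

section CrossPairs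

variable {ι : Type*} (f : Fin k → ι)

def crossPairs : Set (GkV k) :=
  Sum.inr '' {S | ∃ i ∈ S.val, ∃ j ∈ S.val, f i ≠ f j}

variable {f}

@[simp]
lemma inl_notMem_crossPairs (i : Fin k) : Sum.inl i ∉ crossPairs f := by
  simp [crossPairs]

@[simp]
lemma inr_mem_crossPairs {S : {S : Finset (Fin k) // S.card = 2}} :
    Sum.inr S ∈ crossPairs f ↔ ∃ i ∈ S.val, ∃ j ∈ S.val, f i ≠ f j :=
  Sum.inr_injective.mem_set_image

lemma disjoint_partComp_fiber_crossPairs (t : ι) :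
    Disjoint (partComp (f ⁻¹' {t})) (crossPairs f) := by
  refine Set.disjoint_left.mpr ?_
  rintro (i | S) hS
  · exact inl_notMem_crossPairs i
  · intro hS'
    obtain ⟨i, hi, j, hj, hij⟩ := inr_mem_crossPairs.mp hS'
    exact hij ((inr_mem_partComp.mp hS hi).trans (inr_mem_partComp.mp hS hj).symm)

lemma subset_fiber_of_notMem_crossPairs {S : {S : Finset (Fin k) // S.card = 2}}
    (hS : Sum.inr S ∉ crossPairs f) {i : Fin k} (hi : i ∈ S.val) {t : ι} (hit : f i = t) :
    ↑S.val ⊆ f ⁻¹' {t} := by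
  intro j hj
  by_contra hjt
  exact hS (inr_mem_crossPairs.mpr ⟨i, hi, j, hj, fun h => hjt (h.symm.trans hit)⟩)

lemma exists_mem_partComp_fiber {a : GkV k} (ha : a ∉ crossPairs f) :
    ∃ t, a ∈ partComp (f ⁻¹' {t}) := by
  rcases a with i | S
  · exact ⟨f i, inl_mem_partComp.mpr rfl⟩
  · obtain ⟨i, hi⟩ := pair_val_nonempty S
    exact ⟨f i, inr_mem_partComp.mpr (subset_fiber_of_notMem_crossPairs ha hi rfl)⟩

lemma isCompOf_partComp_fiber {t : ι} (ht : t ∈ Set.range f) :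
    IsCompOf (Gk k) (crossPairs f) (partComp (f ⁻¹' {t})) := by
  exact isCompOf_partComp (fun _ hS _ hi hit => subset_fiber_of_notMem_crossPairs hS hi hit)
    (disjoint_partComp_fiber_crossPairs t) (Set.preimage_singleton_nonempty.mpr ht)

lemma setOf_isCompOf_crossPairs (hf : Surjective f) :
    {C | IsCompOf (Gk k) (crossPairs f) C} = Set.range fun t => partComp (f ⁻¹' {t}) := by
  ext C
  constructor
  · rintro ⟨a, ha, rfl⟩
    obtain ⟨t, hat⟩ := exists_mem_partComp_fiber ha
    exact ⟨t, (setOf_reachable_eq_partComp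
      (fun _ hS _ hi hit => subset_fiber_of_notMem_crossPairs hS hi hit)
      (disjoint_partComp_fiber_crossPairs t) hat).symm⟩
  · rintro ⟨t, rfl⟩
    exact isCompOf_partComp_fiber (hf t)

lemma inr_mem_nbhd_partComp_fiber {S : {S : Finset (Fin k) // S.card = 2}}
    (hS : Sum.inr S ∈ crossPairs f) (t : ι) :
    Sum.inr S ∈ nbhd (Gk k) (partComp (f ⁻¹' {t})) ↔ ∃ i ∈ S.val, f i = t := by
  rw [inr_mem_nbhd_partComp]
  refine ⟨fun h => h.2, fun h => ⟨fun hsub => ?_, h⟩⟩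
  exact Set.disjoint_left.mp (disjoint_partComp_fiber_crossPairs t) (inr_mem_partComp.mpr hsub) hS

lemma isFree_crossPairs : IsFree (Gk k) (crossPairs f) := by
  rintro _ ⟨S, -, rfl⟩
  obtain ⟨i, hi⟩ := pair_val_nonempty S
  exact ⟨.inl i, inl_notMem_crossPairs i, hi⟩

end CrossPairs

end Gk

section Tripartition

variable {k : ℕ}

lemma fin_three_exists_pair_avoiding (t : Fin 3) : ∃ u v : Fin 3, u ≠ t ∧ v ≠ t ∧ u ≠ v := by
  revert t; decide

lemma fin_three_pairs_intersect (a b c d : Fin 3) (hab : a ≠ b) (hcd : c ≠ d) :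
    ∃ e, (a = e ∨ b = e) ∧ (c = e ∨ d = e) := by
  revert a b c d; decide

lemma nbhd_partComp_fiber_ne_crossPairs {f : Fin k → Fin 3} (hf : Surjective f) (t : Fin 3) :
    nbhd (Gk k) (partComp (f ⁻¹' {t})) ≠ crossPairs f := by
  obtain ⟨u, v, hut, hvt, huv⟩ := fin_three_exists_pair_avoiding t
  obtain ⟨i, rfl⟩ := hf u
  obtain ⟨j, rfl⟩ := hf v
  let S : {S : Finset (Fin k) // S.card = 2} := ⟨{i, j}, Finset.card_pair (ne_of_apply_ne f huv)⟩
  have hS : Sum.inr S ∈ crossPairs f := inr_mem_crossPairs.mpr ⟨i, by simp [S], j, by simp [S], huv⟩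
  intro h
  obtain ⟨l, hl, rfl⟩ := (inr_mem_nbhd_partComp_fiber hS t).mp (h ▸ hS)
  simp only [S, Finset.mem_insert, Finset.mem_singleton] at hl
  rcases hl with rfl | rfl
  exacts [hut rfl, hvt rfl]

lemma isPMC_crossPairs {f : Fin k → Fin 3} (hf : Surjective f) : IsPMC (Gk k) (crossPairs f) := by
  refine ⟨?_, ?_⟩
  · intro C hC
    obtain ⟨t, rfl⟩ : C ∈ Set.range fun t => partComp (f ⁻¹' {t}) :=
      setOf_isCompOf_crossPairs hf ▸ hC
    exact nbhd_partComp_fiber_ne_crossPairs hf t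
  · rintro _ ⟨S, hSc, rfl⟩ _ ⟨T, hTc, rfl⟩ -
    obtain ⟨i, hi, j, hj, hij⟩ := hSc
    obtain ⟨i', hi', j', hj', hij'⟩ := hTc
    have hS : Sum.inr S ∈ crossPairs f := inr_mem_crossPairs.mpr ⟨i, hi, j, hj, hij⟩
    have hT : Sum.inr T ∈ crossPairs f := inr_mem_crossPairs.mpr ⟨i', hi', j', hj', hij'⟩
    obtain ⟨e, he, he'⟩ := fin_three_pairs_intersect _ _ _ _ hij hij'
    refine .inr ⟨_, isCompOf_partComp_fiber (hf e), ?_, ?_⟩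
    · exact (inr_mem_nbhd_partComp_fiber hS e).mpr (he.elim (⟨i, hi, ·⟩) (⟨j, hj, ·⟩))
    · exact (inr_mem_nbhd_partComp_fiber hT e).mpr (he'.elim (⟨i', hi', ·⟩) (⟨j', hj', ·⟩))

variable {P1 P2 P3 : Set (Fin k)}

lemma IsTripartition.exists_labelling (hpart : IsTripartition P1 P2 P3) :
    ∃ f : Fin k → Fin 3, Surjective f ∧ ∀ t, f ⁻¹' {t} = ![P1, P2, P3] t := by
  classical
  obtain ⟨hne1, hne2, hne3, d12, d13, d23, hcov⟩ := hpart
  have hcover : ∀ i, i ∈ P1 ∨ i ∈ P2 ∨ i ∈ P3 := fun i => by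
    have : i ∈ P1 ∪ P2 ∪ P3 := hcov ▸ Set.mem_univ i
    simpa [or_assoc] using this
  let f : Fin k → Fin 3 := fun i => if i ∈ P1 then 0 else if i ∈ P2 then 1 else 2
  have hfib : ∀ t, f ⁻¹' {t} = ![P1, P2, P3] t := by
    intro t
    ext i
    have h12 : i ∈ P1 → i ∉ P2 := fun h => Set.disjoint_left.mp d12 h
    have h13 : i ∈ P1 → i ∉ P3 := fun h => Set.disjoint_left.mp d13 h
    have h23 : i ∈ P2 → i ∉ P3 := fun h => Set.disjoint_left.mp d23 h
    have := hcover i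
    fin_cases t <;> by_cases hi1 : i ∈ P1 <;> by_cases hi2 : i ∈ P2 <;>
      simp_all [f]
  refine ⟨f, fun t => ?_, hfib⟩
  have : (f ⁻¹' {t}).Nonempty := by
    rw [hfib]; fin_cases t <;> assumption
  exact Set.preimage_singleton_nonempty.mp this

lemma Omega3_eq_crossPairs {f : Fin k → Fin 3} (hf : ∀ t, f ⁻¹' {t} = ![P1, P2, P3] t) :
    Omega3 P1 P2 P3 = crossPairs f := by
  have hmem (i : Fin k) (t : Fin 3) : i ∈ ![P1, P2, P3] t ↔ f i = t := by rw [← hf]; rfl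
  have hsame (i j : Fin k) :
      ((i ∈ P1 ∧ j ∈ P1) ∨ (i ∈ P2 ∧ j ∈ P2) ∨ (i ∈ P3 ∧ j ∈ P3)) ↔ f i = f j := by
    have h1 (l : Fin k) : l ∈ P1 ↔ f l = 0 := hmem l 0
    have h2 (l : Fin k) : l ∈ P2 ↔ f l = 1 := hmem l 1
    have h3 (l : Fin k) : l ∈ P3 ↔ f l = 2 := hmem l 2
    simp only [h1, h2, h3]
    generalize f i = a, f j = b
    revert a b; decide
  ext x
  simp only [Omega3, crossPairs, Set.mem_image, Set.mem_ofPred_eq, hsame]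
  constructor
  · rintro ⟨S, rfl, i, hi, j, hj, -, hij⟩
    exact ⟨S, ⟨i, hi, j, hj, hij⟩, rfl⟩
  · rintro ⟨S, ⟨i, hi, j, hj, hij⟩, rfl⟩
    exact ⟨S, rfl, i, hi, j, hj, ne_of_apply_ne f hij, hij⟩

end Tripartition

theorem stmt6 (k : ℕ) (P1 P2 P3 : Set (Fin k)) (hpart : IsTripartition P1 P2 P3) :
    IsPMC (Gk k) (Omega3 P1 P2 P3) ∧ IsFree (Gk k) (Omega3 P1 P2 P3) ∧
    {C | IsCompOf (Gk k) (Omega3 P1 P2 P3) C} = {partComp P1, partComp P2, partComp P3} := by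
  obtain ⟨f, hsurj, hfib⟩ := hpart.exists_labelling
  rw [Omega3_eq_crossPairs hfib, setOf_isCompOf_crossPairs hsurj]
  refine ⟨isPMC_crossPairs hsurj, isFree_crossPairs, ?_⟩
  ext C
  simp [hfib, Fin.exists_fin_succ, eq_comm]
end

section
/- With M(G, V_k) as below, there is no free PMC Ω of M(G, V_k) with V_k ⊆ Ω. -/
/-- `G` together with a vertex `M_X` for each nonempty `X ⊆ Vk`, adjacent exactly to `X`. -/
def Mgraph {V : Type*} (G : SimpleGraph V) (Vk : Set V) :
    SimpleGraph (V ⊕ {X : Set V // X ⊆ Vk ∧ X.Nonempty}) where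
  Adj a b := match a, b with
    | .inl u, .inl w => G.Adj u w
    | .inl u, .inr X => u ∈ X.val
    | .inr X, .inl u => u ∈ X.val
    | .inr _, .inr _ => False
  symm := ⟨by rintro (u|X) (w|Y) h <;> simp_all <;> exact h.symm⟩
  loopless := ⟨by rintro (u|X) h <;> simp_all⟩

/-!
`V_k` is a vertex cover of `M(G, V_k)` as well, so a vertex of a free `Ω ⊇ V_k` lying outside
`V_k` would have all its neighbours in `V_k ⊆ Ω`; hence `Ω = V_k`. But then `M_{V_k}` lies
outside `Ω` with neighbourhood exactly `Ω`, so `{M_{V_k}}` is a full component of `M(G, V_k) \ Ω`.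
-/

section PMC

variable {V : Type*} {H : SimpleGraph V} {Ω S : Set V}

theorem IsFree.subset_of_isVertexCover (hΩ : IsFree H Ω) (hS : H.IsVertexCover S)
    (hSΩ : S ⊆ Ω) : Ω ⊆ S := by
  intro u hu
  by_contra huS
  obtain ⟨w, hwΩ, huw⟩ := hΩ u hu
  exact hwΩ (hSΩ ((hS huw).resolve_left huS))

theorem nbhd_singleton (H : SimpleGraph V) (a : V) : nbhd H {a} = H.neighborSet a := by
  ext w
  simp only [nbhd, Set.mem_singleton_iff, exists_eq_left, Set.mem_ofPred_eq,
    SimpleGraph.mem_neighborSet]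
  exact ⟨fun h => h.2.symm, fun h => ⟨h.ne.symm, h.symm⟩⟩

theorem isCompOf_singleton {a : V} (ha : a ∉ Ω) (hN : H.neighborSet a ⊆ Ω) :
    IsCompOf H Ω {a} := by
  refine ⟨a, ha, Set.ext fun b => ⟨?_, ?_⟩⟩
  · rintro rfl
    exact ⟨ha, .refl _⟩
  · rintro ⟨-, ⟨p⟩⟩
    cases p with
    | nil => rfl
    | cons h _ => exact absurd (hN h.1) h.2.2

theorem not_isPMC_of_neighborSet_eq {a : V} (ha : a ∉ Ω) (hN : H.neighborSet a = Ω) :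
    ¬ IsPMC H Ω := fun hΩ =>
  hΩ.1 {a} (isCompOf_singleton ha hN.le) ((nbhd_singleton H a).trans hN)

end PMC

section Mgraph

variable {V : Type*} {G : SimpleGraph V} {Vk : Set V}

theorem mgraph_isVertexCover (hvc : G.IsVertexCover Vk) :
    (Mgraph G Vk).IsVertexCover (Sum.inl '' Vk) := by
  rintro (u | X) (w | Y) h
  · simpa using hvc h
  · exact .inl ⟨u, Y.2.1 h, rfl⟩
  · exact .inr ⟨w, X.2.1 h, rfl⟩
  · exact h.elim

theorem mgraph_neighborSet_inr (X : {X : Set V // X ⊆ Vk ∧ X.Nonempty}) :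
    (Mgraph G Vk).neighborSet (.inr X) = Sum.inl '' X.val := by
  ext (u | Y) <;> simp [Mgraph]

end Mgraph

theorem stmt13_general {V : Type*} (G : SimpleGraph V) (Vk : Set V)
    (hvc : ∀ a b, G.Adj a b → a ∈ Vk ∨ b ∈ Vk) (hne : Vk.Nonempty) :
    ¬ ∃ Ω : Set (V ⊕ {X : Set V // X ⊆ Vk ∧ X.Nonempty}),
      IsPMC (Mgraph G Vk) Ω ∧ IsFree (Mgraph G Vk) Ω ∧ ∀ v ∈ Vk, Sum.inl v ∈ Ω := by
  rintro ⟨Ω, hPMC, hfree, hsub⟩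
  have hVkΩ : Sum.inl '' Vk ⊆ Ω := Set.image_subset_iff.2 hsub
  have hΩ : Ω = Sum.inl '' Vk :=
    (hfree.subset_of_isVertexCover (mgraph_isVertexCover fun _ _ => hvc _ _) hVkΩ).antisymm hVkΩ
  exact not_isPMC_of_neighborSet_eq (a := .inr ⟨Vk, subset_rfl, hne⟩) (by simp [hΩ])
    (by rw [hΩ, mgraph_neighborSet_inr]) hPMC

theorem stmt13 {V : Type*} [Fintype V] (G : SimpleGraph V) (Vk : Set V)
    (hvc : ∀ a b, G.Adj a b → a ∈ Vk ∨ b ∈ Vk) (hne : Vk.Nonempty) :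
    ¬ ∃ Ω : Set (V ⊕ {X : Set V // X ⊆ Vk ∧ X.Nonempty}),
      IsPMC (Mgraph G Vk) Ω ∧ IsFree (Mgraph G Vk) Ω ∧ ∀ v ∈ Vk, Sum.inl v ∈ Ω :=
  stmt13_general G Vk hvc hne
end
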